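/- Let n ≥ 1, r > 0, and let F : ℤ² → GL(n,ℂ) satisfy F(y) = I for all y ∉ B_r ∩ ℤ². Let z ∈ B_r ∩ ℤ² be of maximal norm, i.e. |z| ≥ |ζ| for all ζ ∈ B_r ∩ ℤ². Then S(F)(γ_z) = F(z). -/

import Mathlib

noncomputable section

open Matrix

/-- Embedding of the lattice `ℤ^d` into Euclidean `ℝ^d`. -/
def emb {d : ℕ} (z : Fin d → ℤ) : EuclideanSpace ℝ (Fin d) := WithLp.toLp 2 (fun i => (z i : ℝ))

/- Ordered product of `Φ` over `supp`: the factors are multiplied so that larger values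
of `key` contribute factors further to the left (the value is `1` if no strictly
`key`-decreasing enumeration of `supp` by a list exists). -/
open Classical in
noncomputable def oprodBy {α G : Type*} [Monoid G] (Φ : α → G) (key : α → ℝ) (supp : Set α) : G :=
  if h : ∃ l : List α, l.Pairwise (fun a b => key b < key a) ∧ ∀ a, a ∈ l ↔ a ∈ supp
  then (h.choose.map Φ).prod else 1

/-- The discrete non-abelian X-ray transform of `F` along the oriented line through `x`
with direction `θ`: the ordered product of `F y` over lattice points `y` on the line,
the point furthest along the orientation contributing the leftmost factor. -/
noncomputable def discS {d : ℕ} {G : Type*} [Monoid G] (F : (Fin d → ℤ) → G)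
    (x θ : EuclideanSpace ℝ (Fin d)) : G :=
  oprodBy F (fun z => ∑ i, ((z i : ℝ) - x i) * θ i)
    {z | (∃ t : ℝ, emb z = x + t • θ) ∧ F z ≠ 1}
/-- The direction of the rational ray γ_z in ℝ²: for z ≠ 0 it is (−z₂, z₁)/|z|, and for
z = 0 it is a fixed rational direction θ₀. -/
def rayDir (θ₀ : EuclideanSpace ℝ (Fin 2)) (z : Fin 2 → ℤ) : EuclideanSpace ℝ (Fin 2) :=
  if z = 0 then θ₀ else ‖emb z‖⁻¹ • emb ![-(z 1), z 0]

/-!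
A lattice point `y` on `γ_z` is `z + t θ` with `θ` a unit vector orthogonal to `z` (for `z ≠ 0`),
so `|y|² = |z|² + t²`. If `F y ≠ I` then `y ∈ B_r`, and maximality of `|z|` forces `t = 0`,
i.e. `y = z`; for `z = 0` maximality forces `y = 0` directly. Hence the ordered product along
`γ_z` has at most the single non-trivial factor `F z`.
-/

section OrderedProduct

variable {α G : Type*} [Monoid G] (Φ : α → G) (key : α → ℝ)

lemma oprodBy_eq_prod {supp : Set α} (l : List α)
    (hp : l.Pairwise (fun a b => key b < key a)) (hm : ∀ a, a ∈ l ↔ a ∈ supp) :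
    oprodBy Φ key supp = (l.map Φ).prod := by
  have h : ∃ l : List α, l.Pairwise (fun a b => key b < key a) ∧ ∀ a, a ∈ l ↔ a ∈ supp :=
    ⟨l, hp, hm⟩
  have : Std.Antisymm fun a b : α => key b < key a :=
    ⟨fun _ _ hab hba => absurd (hab.trans hba) (lt_irrefl _)⟩
  have : Std.Irrefl fun a b : α => key b < key a := ⟨fun _ => lt_irrefl _⟩
  rw [oprodBy, dif_pos h,
    h.choose_spec.1.eq_of_mem_iff hp fun a => (h.choose_spec.2 a).trans (hm a).symm]

lemma oprodBy_eq_of_subset_singleton {supp : Set α} {c : α} (hsupp : supp ⊆ {c})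
    (hc : Φ c ≠ 1 → c ∈ supp) : oprodBy Φ key supp = Φ c := by
  by_cases hmem : c ∈ supp
  · rw [oprodBy_eq_prod Φ key [c] (by simp)
      fun a => by simpa using ⟨fun h => h ▸ hmem, fun h => hsupp h⟩]
    simp
  · rw [oprodBy_eq_prod Φ key [] (by simp) fun a => by simpa using fun h => hmem (hsupp h ▸ h),
      not_not.1 (mt hc hmem)]
    simp

end OrderedProduct

lemma emb_injective {d : ℕ} : Function.Injective (emb (d := d)) := by
  intro y z h
  funext i
  have := congrArg (fun v => v i) h
  simp only [emb, PiLp.toLp_apply] at this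
  exact_mod_cast this

lemma emb_zero {d : ℕ} : emb (0 : Fin d → ℤ) = 0 := by
  ext i; simp [emb]

section RayDirection

variable (θ₀ : EuclideanSpace ℝ (Fin 2)) (z : Fin 2 → ℤ)

lemma inner_emb_rotate : inner ℝ (emb z) (emb ![-(z 1), z 0]) = 0 := by
  simp only [emb, PiLp.inner_apply, RCLike.inner_apply, map_intCast, Fin.sum_univ_two,
    cons_val_zero, cons_val_one, cons_val_fin_one, Int.cast_neg]
  ring

lemma norm_emb_rotate : ‖emb ![-(z 1), z 0]‖ = ‖emb z‖ := by
  simp [EuclideanSpace.norm_eq, Fin.sum_univ_two, emb, add_comm]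

lemma inner_emb_rayDir : inner ℝ (emb z) (rayDir θ₀ z) = 0 := by
  by_cases hz : z = 0
  · simp [hz, emb_zero]
  · simp [rayDir, hz, real_inner_smul_right, inner_emb_rotate]

lemma norm_rayDir {z : Fin 2 → ℤ} (hz : z ≠ 0) : ‖rayDir θ₀ z‖ = 1 := by
  have hpos : ‖emb z‖ ≠ 0 := norm_ne_zero_iff.2 fun h => hz (emb_injective (h.trans emb_zero.symm))
  rw [rayDir, if_neg hz, norm_smul, norm_emb_rotate, norm_inv, norm_norm, inv_mul_cancel₀ hpos]

lemma eq_of_emb_eq_add_smul_rayDir {y : Fin 2 → ℤ} {t : ℝ}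
    (hy : emb y = emb z + t • rayDir θ₀ z) (hle : ‖emb y‖ ≤ ‖emb z‖) : y = z := by
  by_cases hz : z = 0
  · subst hz
    rw [emb_zero, norm_zero] at hle
    exact emb_injective ((norm_le_zero_iff.1 hle).trans emb_zero.symm)
  · have hpyth : ‖emb y‖ ^ 2 = ‖emb z‖ ^ 2 + t ^ 2 := by
      rw [hy, norm_add_sq_real, real_inner_smul_right, inner_emb_rayDir, norm_smul,
        norm_rayDir θ₀ hz, mul_one, Real.norm_eq_abs, sq_abs]
      ring
    have ht : t = 0 := by nlinarith [norm_nonneg (emb y), sq_nonneg t]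
    exact emb_injective (by simpa [ht] using hy)

end RayDirection

theorem stmt4_general (n : ℕ) (r : ℝ)
    (F : (Fin 2 → ℤ) → GL (Fin n) ℂ) (hF : ∀ y : Fin 2 → ℤ, ¬ ‖emb y‖ ≤ r → F y = 1)
    (θ₀ : EuclideanSpace ℝ (Fin 2))
    (z : Fin 2 → ℤ)
    (hmax : ∀ ζ : Fin 2 → ℤ, ‖emb ζ‖ ≤ r → ‖emb ζ‖ ≤ ‖emb z‖) :
    discS F (emb z) (rayDir θ₀ z) = F z := by
  refine oprodBy_eq_of_subset_singleton F _ ?_ fun hFz => ⟨⟨0, by simp⟩, hFz⟩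
  rintro y ⟨⟨t, hy⟩, hFy⟩
  have hyr : ‖emb y‖ ≤ r := not_not.1 (mt (hF y) hFy)
  exact eq_of_emb_eq_add_smul_rayDir θ₀ z hy (hmax y hyr)

/-- if F = I outside B_r ∩ ℤ² and z is a lattice point of B_r of maximal
norm, then the discrete non-abelian X-ray transform along the rational ray γ_z
equals F z. -/
theorem stmt4 (n : ℕ) (hn : 1 ≤ n) (r : ℝ) (hr : 0 < r)
    (F : (Fin 2 → ℤ) → GL (Fin n) ℂ) (hF : ∀ y : Fin 2 → ℤ, ¬ ‖emb y‖ ≤ r → F y = 1)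
    (θ₀ : EuclideanSpace ℝ (Fin 2))
    (hθ₀ : ∃ w : Fin 2 → ℤ, w ≠ 0 ∧ θ₀ = ‖emb w‖⁻¹ • emb w)
    (z : Fin 2 → ℤ) (hz : ‖emb z‖ ≤ r)
    (hmax : ∀ ζ : Fin 2 → ℤ, ‖emb ζ‖ ≤ r → ‖emb ζ‖ ≤ ‖emb z‖) :
    discS F (emb z) (rayDir θ₀ z) = F z :=
  stmt4_general n r F hF θ₀ z hmax
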